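/- Entropy conservation for strong permutation extractors: let {P_y}_{y∈S} be an (n,k) →_ε m strong permutation extractor and X a k-source on {0,1}^n. Then (U_S, P^E_{U_S}(X), P^R_{U_S}(X)) is 2ε-close in total variation to (U_{S×{0,1}^m}, W) where U_{S×{0,1}^m} is uniform on S × {0,1}^m and, for every (y,z), the conditional random variable W given U_{S×{0,1}^m} = (y,z) has min-entropy at least k − m − 1. -/
import Mathlib


open scoped BigOperators

/-- Entropy conservation for strong permutation extractors: let
`{P_y}_{y∈S}`, `P_y(x) = (P^E_y(x), P^R_y(x))`, be an `(n,k) →_ε m` strong permutation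
extractor and `X` a `k`-source on `{0,1}^n`.  Then the joint distribution of
`(U_S, P^E_{U_S}(X), P^R_{U_S}(X))` is `2ε`-close in total variation to
`(U_{S×{0,1}^m}, W)` where the first component is uniform on `S × {0,1}^m` and, for
every `(y,z)`, the conditional distribution `W(·|y,z)` has min-entropy at least
`k − m − 1`. -/
theorem stmt18 (n m : ℕ) (hm : m ≤ n) (S : Type*) [Fintype S] [Nonempty S]
    (k ε : ℝ) (hk0 : 0 ≤ k) (hkn : k ≤ n) (hε : 0 ≤ ε)
    (PE : S → (Fin n → Bool) → (Fin m → Bool))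
    (PR : S → (Fin n → Bool) → (Fin (n - m) → Bool))
    (hperm : ∀ y, Function.Bijective (fun x => (PE y x, PR y x)))
    (hext : ∀ q : (Fin n → Bool) → ℝ, (∀ x, 0 ≤ q x) → (∑ x, q x = 1) →
      (∀ x, q x ≤ (2 : ℝ) ^ (-k)) →
      (1 / (Fintype.card S : ℝ)) * ∑ y : S, (1 / 2) * ∑ z : Fin m → Bool,
          |(∑ x, if PE y x = z then q x else 0) - 1 / (2 : ℝ) ^ m| ≤ ε)
    (pX : (Fin n → Bool) → ℝ) (hpX0 : ∀ x, 0 ≤ pX x) (hpX1 : ∑ x, pX x = 1)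
    (hmin : ∀ x, pX x ≤ (2 : ℝ) ^ (-k)) :
    ∃ W : S → (Fin m → Bool) → (Fin (n - m) → Bool) → ℝ,
      (∀ y z w, 0 ≤ W y z w) ∧ (∀ y z, ∑ w, W y z w = 1) ∧
      (∀ y z w, W y z w ≤ (2 : ℝ) ^ (-(k - m - 1))) ∧
      (1 / 2) * ∑ y : S, ∑ z : Fin m → Bool, ∑ w : Fin (n - m) → Bool,
          |(1 / (Fintype.card S : ℝ)) *
              (∑ x, if PE y x = z ∧ PR y x = w then pX x else 0)
            - (1 / ((Fintype.card S : ℝ) * (2 : ℝ) ^ m)) * W y z w| ≤ 2 * ε := by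
  classical
  have h2 : (0:ℝ) < 2 := by norm_num
  set Sc : ℝ := (Fintype.card S : ℝ) with hScdef
  have hSc : (0:ℝ) < Sc := by
    rw [hScdef]; exact_mod_cast Fintype.card_pos
  set u : ℝ := 1 / (2:ℝ) ^ m with hudef
  have hu : (0:ℝ) < u := by rw [hudef]; positivity
  have hu2 : (2:ℝ) ^ m * u = 1 := by rw [hudef]; field_simp
  have hu2' : u * (2:ℝ) ^ m = 1 := by rw [mul_comm]; exact hu2
  set cap : ℝ := (2:ℝ) ^ (-(k - m - 1)) with hcapdef
  have hcap0 : (0:ℝ) < cap := Real.rpow_pos_of_pos h2 _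
  have hcapk : (2:ℝ) ^ m * (2:ℝ) ^ (-k) ≤ cap := by
    rw [hcapdef, ← Real.rpow_natCast 2 m, ← Real.rpow_add h2]
    exact Real.rpow_le_rpow_of_exponent_le one_le_two (by push_cast; linarith)
  set T : ℝ := (2:ℝ) ^ (n - m) * cap with hTdef
  have hcast : ((n - m : ℕ) : ℝ) = (n : ℝ) - m := by
    rw [Nat.cast_sub hm]
  have hT2 : (2:ℝ) ≤ T := by
    rw [hTdef, hcapdef, ← Real.rpow_natCast 2 (n - m), ← Real.rpow_add h2]
    calc (2:ℝ) = 2 ^ (1:ℝ) := (Real.rpow_one 2).symm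
    _ ≤ _ := Real.rpow_le_rpow_of_exponent_le one_le_two (by rw [hcast]; linarith)
  have hhalf : (2:ℝ) ^ m * ((2:ℝ) ^ (n - m) * (2:ℝ) ^ (-k)) ≤ T - 1 := by
    have e1 : (2:ℝ) ^ m * ((2:ℝ) ^ (n - m) * (2:ℝ) ^ (-k)) * 2
        = (2:ℝ) ^ ((m:ℝ) + ((n - m : ℕ):ℝ) + (-k) + 1) := by
      rw [Real.rpow_add h2, Real.rpow_add h2, Real.rpow_add h2, Real.rpow_one,
        Real.rpow_natCast, Real.rpow_natCast]
      ring
    have e2 : T = (2:ℝ) ^ (((n - m : ℕ):ℝ) + (-(k - m - 1))) := by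
      rw [Real.rpow_add h2, Real.rpow_natCast, hTdef, hcapdef]
    have heq : (2:ℝ) ^ m * ((2:ℝ) ^ (n - m) * (2:ℝ) ^ (-k)) * 2 = T := by
      rw [e1, e2]
      congr 1
      rw [hcast]; ring
    linarith
  -- the bijections as equivalences
  let E : ∀ _y : S, (Fin n → Bool) ≃ ((Fin m → Bool) × (Fin (n - m) → Bool)) :=
    fun y => Equiv.ofBijective _ (hperm y)
  set p : S → (Fin m → Bool) → (Fin (n - m) → Bool) → ℝ :=
    fun y z w => ∑ x, if PE y x = z ∧ PR y x = w then pX x else 0 with hpdef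
  have hpval : ∀ y z w, p y z w = pX ((E y).symm (z, w)) := by
    intro y z w
    have hiff : ∀ x, (PE y x = z ∧ PR y x = w) ↔ x = (E y).symm (z, w) := by
      intro x
      constructor
      · rintro ⟨h1, h2⟩
        have : E y x = (z, w) := by
          rw [← h1, ← h2]; rfl
        rw [← this, Equiv.symm_apply_apply]
      · rintro rfl
        have := (E y).apply_symm_apply (z, w)
        exact ⟨congrArg Prod.fst this, congrArg Prod.snd this⟩
    rw [hpdef]
    simp only [hiff]
    simp
  have hp0 : ∀ y z w, 0 ≤ p y z w := by
    intro y z w; rw [hpval]; exact hpX0 _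
  have hpk : ∀ y z w, p y z w ≤ (2:ℝ) ^ (-k) := by
    intro y z w; rw [hpval]; exact hmin _
  set pz : S → (Fin m → Bool) → ℝ := fun y z => ∑ w, p y z w with hpzdef
  have hpz_eq : ∀ y z, pz y z = ∑ x, if PE y x = z then pX x else 0 := by
    intro y z
    rw [hpzdef]
    simp only [hpdef]
    rw [Finset.sum_comm]
    refine Finset.sum_congr rfl fun x _ => ?_
    by_cases h : PE y x = z
    · simp [h]
    · simp [h]
  have hcard : ((Fintype.card (Fin (n - m) → Bool)) : ℝ) = (2:ℝ) ^ (n - m) := by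
    simp [Fintype.card_fun]
  have hpzk : ∀ y z, pz y z ≤ (2:ℝ) ^ (n - m) * (2:ℝ) ^ (-k) := by
    intro y z
    calc pz y z ≤ ∑ _w : Fin (n - m) → Bool, (2:ℝ) ^ (-k) :=
          Finset.sum_le_sum fun w _ => hpk y z w
    _ = _ := by rw [Finset.sum_const, nsmul_eq_mul, Finset.card_univ, hcard]
  set W : S → (Fin m → Bool) → (Fin (n - m) → Bool) → ℝ := fun y z w =>
    if u ≤ pz y z then p y z w / pz y z
    else (2:ℝ) ^ m * p y z w +
      (1 - (2:ℝ) ^ m * pz y z) * ((cap - (2:ℝ) ^ m * p y z w) / (T - (2:ℝ) ^ m * pz y z))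
    with hWdef
  have key : ∀ y z, (∀ w, 0 ≤ W y z w) ∧ (∑ w, W y z w = 1) ∧ (∀ w, W y z w ≤ cap) ∧
      (∑ w, |p y z w - u * W y z w| = |pz y z - u|) := by
    intro y z
    have h2m : (0:ℝ) < (2:ℝ) ^ m := by positivity
    have hDb : (2:ℝ) ^ m * pz y z ≤ T - 1 :=
      le_trans (mul_le_mul_of_nonneg_left (hpzk y z) h2m.le) hhalf
    have hsump : ∑ w, p y z w = pz y z := (hpzdef ▸ rfl)
    by_cases h : u ≤ pz y z
    · have hpzpos : 0 < pz y z := lt_of_lt_of_le hu h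
      simp only [hWdef, if_pos h]
      refine ⟨fun w => div_nonneg (hp0 y z w) hpzpos.le, ?_, ?_, ?_⟩
      · rw [← Finset.sum_div, hsump]
        exact div_self hpzpos.ne'
      · intro w
        calc p y z w / pz y z ≤ (2:ℝ) ^ (-k) / u :=
              div_le_div₀ (Real.rpow_pos_of_pos h2 _).le (hpk y z w) hu h
        _ = (2:ℝ) ^ m * (2:ℝ) ^ (-k) := by rw [hudef]; field_simp
        _ ≤ cap := hcapk
      · have hterm : ∀ w ∈ Finset.univ, |p y z w - u * (p y z w / pz y z)|
            = p y z w - u * (p y z w / pz y z) := by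
          intro w _
          apply abs_of_nonneg
          have e : u * (p y z w / pz y z) = p y z w * (u / pz y z) := by ring
          have h1 : u / pz y z ≤ 1 := (div_le_one hpzpos).mpr h
          have := mul_le_mul_of_nonneg_left h1 (hp0 y z w)
          rw [mul_one] at this
          rw [e] at *
          linarith
        rw [Finset.sum_congr rfl hterm, Finset.sum_sub_distrib, ← Finset.mul_sum,
          ← Finset.sum_div, hsump, div_self hpzpos.ne', mul_one,
          abs_of_nonneg (sub_nonneg.mpr h)]
    · push_neg at h
      have hc0 : 0 ≤ 1 - (2:ℝ) ^ m * pz y z := by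
        have := mul_lt_mul_of_pos_left h h2m
        rw [hu2] at this
        linarith
      have hD : 0 < T - (2:ℝ) ^ m * pz y z := by linarith
      have hD1 : 1 - (2:ℝ) ^ m * pz y z ≤ T - (2:ℝ) ^ m * pz y z := by linarith
      have hs0 : ∀ w, 0 ≤ cap - (2:ℝ) ^ m * p y z w := by
        intro w
        have := mul_le_mul_of_nonneg_left (hpk y z w) h2m.le
        linarith
      have hsum_s : ∑ w, (cap - (2:ℝ) ^ m * p y z w) = T - (2:ℝ) ^ m * pz y z := by
        rw [Finset.sum_sub_distrib, ← Finset.mul_sum, hsump, Finset.sum_const,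
          nsmul_eq_mul, Finset.card_univ, hcard, hTdef]
      simp only [hWdef, if_neg (not_le.mpr h)]
      refine ⟨?_, ?_, ?_, ?_⟩
      · intro w
        exact add_nonneg (mul_nonneg h2m.le (hp0 y z w))
          (mul_nonneg hc0 (div_nonneg (hs0 w) hD.le))
      · rw [Finset.sum_add_distrib, ← Finset.mul_sum, hsump, ← Finset.mul_sum,
          ← Finset.sum_div, hsum_s, div_self hD.ne', mul_one]
        ring
      · intro w
        have h1 : (1 - (2:ℝ) ^ m * pz y z) / (T - (2:ℝ) ^ m * pz y z) ≤ 1 :=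
          (div_le_one hD).mpr hD1
        have e : (1 - (2:ℝ) ^ m * pz y z) * ((cap - (2:ℝ) ^ m * p y z w) / (T - (2:ℝ) ^ m * pz y z))
            = (cap - (2:ℝ) ^ m * p y z w) * ((1 - (2:ℝ) ^ m * pz y z) / (T - (2:ℝ) ^ m * pz y z)) := by
          ring
        rw [e]
        have h3 := mul_le_mul_of_nonneg_left h1 (hs0 w)
        rw [mul_one] at h3
        linarith
      · have hterm : ∀ w ∈ Finset.univ,
            |p y z w - u * ((2:ℝ) ^ m * p y z w +
              (1 - (2:ℝ) ^ m * pz y z) * ((cap - (2:ℝ) ^ m * p y z w) / (T - (2:ℝ) ^ m * pz y z)))|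
            = u * ((1 - (2:ℝ) ^ m * pz y z) * ((cap - (2:ℝ) ^ m * p y z w) / (T - (2:ℝ) ^ m * pz y z))) := by
          intro w _
          have e : p y z w - u * ((2:ℝ) ^ m * p y z w +
              (1 - (2:ℝ) ^ m * pz y z) * ((cap - (2:ℝ) ^ m * p y z w) / (T - (2:ℝ) ^ m * pz y z)))
              = -(u * ((1 - (2:ℝ) ^ m * pz y z) * ((cap - (2:ℝ) ^ m * p y z w) / (T - (2:ℝ) ^ m * pz y z))))
              + (1 - u * (2:ℝ) ^ m) * p y z w := by
            ring
          rw [e, hu2']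
          rw [show (1:ℝ) - 1 = 0 by norm_num, zero_mul, add_zero, abs_neg]
          exact abs_of_nonneg (mul_nonneg hu.le (mul_nonneg hc0 (div_nonneg (hs0 w) hD.le)))
        rw [Finset.sum_congr rfl hterm, ← Finset.mul_sum, ← Finset.mul_sum,
          ← Finset.sum_div, hsum_s, div_self hD.ne', mul_one]
        rw [abs_of_nonpos (by linarith : pz y z - u ≤ 0)]
        have : u * ((2:ℝ) ^ m * pz y z) = pz y z := by
          rw [← mul_assoc, hu2', one_mul]
        nlinarith [this]
  refine ⟨W, fun y z w => (key y z).1 w, fun y z => (key y z).2.1,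
    fun y z w => (key y z).2.2.1 w, ?_⟩
  have hpapp : ∀ y z w, (∑ x, if PE y x = z ∧ PR y x = w then pX x else 0) = p y z w :=
    fun _ _ _ => rfl
  have h2m0 : ((2:ℝ) ^ m) ≠ 0 := by positivity
  have habs : ∀ y z w, |1 / Sc * p y z w - 1 / (Sc * (2:ℝ) ^ m) * W y z w|
      = 1 / Sc * |p y z w - u * W y z w| := by
    intro y z w
    have e : 1 / Sc * p y z w - 1 / (Sc * (2:ℝ) ^ m) * W y z w
        = 1 / Sc * (p y z w - u * W y z w) := by
      rw [hudef]
      field_simp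
    rw [e, abs_mul, abs_of_nonneg (by positivity : (0:ℝ) ≤ 1 / Sc)]
  have step : ∀ y z, ∑ w, 1 / Sc * |p y z w - u * W y z w| = 1 / Sc * |pz y z - u| := by
    intro y z
    rw [← Finset.mul_sum, (key y z).2.2.2]
  calc (1/2) * ∑ y : S, ∑ z : Fin m → Bool, ∑ w : Fin (n - m) → Bool,
        |1 / Sc * (∑ x, if PE y x = z ∧ PR y x = w then pX x else 0)
          - 1 / (Sc * (2:ℝ) ^ m) * W y z w|
      = (1/2) * ∑ y : S, ∑ z : Fin m → Bool, 1 / Sc * |pz y z - u| := by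
        simp only [hpapp, habs, step]
  _ = 1 / Sc * ∑ y : S, (1/2) * ∑ z : Fin m → Bool, |pz y z - u| := by
        simp only [← Finset.mul_sum]
        ring
  _ ≤ ε := by
        have H := hext pX hpX0 hpX1 hmin
        simp only [← hpz_eq] at H
        exact H
  _ ≤ 2 * ε := by linarith
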